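/- Monotonicity of the CI coherence measure under left composition with a CI channel: if f is weakly monotone, then for any channel N and any CI channel Φ, C_f^{CI}(Φ ∘ N) ≤ C_f^{CI}(N), where C_f^{CI}(N) = inf over CI channels K of f(N∘Δ, K∘Δ). -/

import Mathlib

open Matrix ComplexOrder

noncomputable section

/-- The completely dephasing operator in the standard basis of `Fin d`. -/
def deph (d : ℕ) : Matrix (Fin d) (Fin d) ℂ →ₗ[ℂ] Matrix (Fin d) (Fin d) ℂ where
  toFun ρ := Matrix.of fun i j => if i = j then ρ i j else 0
  map_add' x y := by
    ext i j
    by_cases h : i = j <;> simp [h]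
  map_smul' c x := by
    ext i j
    by_cases h : i = j <;> simp [h]

/-- The Choi matrix of a linear map between matrix algebras. -/
def choi {ι κ : Type} [Fintype ι] [DecidableEq ι] [Fintype κ]
    (N : Matrix ι ι ℂ →ₗ[ℂ] Matrix κ κ ℂ) : Matrix (ι × κ) (ι × κ) ℂ :=
  Matrix.of fun p q => N (Matrix.single p.1 q.1 1) p.2 q.2

/-- A quantum channel: completely positive (PSD Choi matrix) and trace preserving. -/
def IsChannel {ι κ : Type} [Fintype ι] [DecidableEq ι] [Fintype κ]
    (N : Matrix ι ι ℂ →ₗ[ℂ] Matrix κ κ ℂ) : Prop :=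
  (choi N).PosSemidef ∧ ∀ ρ : Matrix ι ι ℂ, (N ρ).trace = ρ.trace

/-- A quantum state (density matrix). -/
def IsState {ι : Type} [Fintype ι] (ρ : Matrix ι ι ℂ) : Prop :=
  ρ.PosSemidef ∧ ρ.trace = 1

/-- The square root of a PSD matrix, as `Matrix.PosSemidef.sqrt` was defined in older Mathlib. -/
def psdSqrt {ι : Type} [Fintype ι] [DecidableEq ι] {A : Matrix ι ι ℂ} (hA : A.PosSemidef) :
    Matrix ι ι ℂ :=
  hA.1.eigenvectorUnitary.1 * Matrix.diagonal ((↑) ∘ (√·) ∘ hA.1.eigenvalues) *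
    (star hA.1.eigenvectorUnitary : Matrix ι ι ℂ)

/-- Trace norm of a matrix: `Tr √(XᴴX)`. -/
def traceNorm {ι : Type} [Fintype ι] [DecidableEq ι] (X : Matrix ι ι ℂ) : ℝ :=
  (psdSqrt (Matrix.posSemidef_conjTranspose_mul_self X)).trace.re

/-- `N ⊗ I_R` acting on matrices over `ι × Fin r`. -/
def tensorId {ι κ : Type} [Fintype ι] [DecidableEq ι]
    (N : Matrix ι ι ℂ → Matrix κ κ ℂ) (r : ℕ)
    (X : Matrix (ι × Fin r) (ι × Fin r) ℂ) : Matrix (κ × Fin r) (κ × Fin r) ℂ :=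
  Matrix.of fun p q =>
    ∑ a₁ : ι, ∑ a₂ : ι, N (Matrix.single a₁ a₂ 1) p.1 q.1 * X (a₁, p.2) (a₂, q.2)


-- AUX

lemma deph_apply (d : ℕ) (ρ : Matrix (Fin d) (Fin d) ℂ) (i j : Fin d) :
    deph d ρ i j = if i = j then ρ i j else 0 := rfl

lemma deph_idem (d : ℕ) : deph d ∘ₗ deph d = deph d := by
  refine LinearMap.ext fun ρ => ?_
  ext i j
  simp only [LinearMap.comp_apply, deph_apply]
  by_cases h : i = j <;> simp [h]

lemma choi_comp {ι κ μ : Type} [Fintype ι] [DecidableEq ι] [Fintype κ] [DecidableEq κ]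
    [Fintype μ]
    (M : Matrix ι ι ℂ →ₗ[ℂ] Matrix κ κ ℂ) (N : Matrix κ κ ℂ →ₗ[ℂ] Matrix μ μ ℂ)
    (p q : ι × μ) :
    choi (N ∘ₗ M) p q
      = ∑ s : κ, ∑ t : κ, choi M (p.1, s) (q.1, t) * choi N (s, p.2) (t, q.2) := by
  have h := Matrix.matrix_eq_sum_single (M (Matrix.single p.1 q.1 1))
  simp only [choi, Matrix.of_apply, LinearMap.comp_apply]
  conv_lhs => rw [h]
  simp only [map_sum, Matrix.sum_apply]
  refine Finset.sum_congr rfl fun s _ => Finset.sum_congr rfl fun t _ => ?_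
  have h2 : Matrix.single s t (M (Matrix.single p.1 q.1 1) s t)
      = (M (Matrix.single p.1 q.1 1) s t) • Matrix.single s t (1:ℂ) := by
    rw [Matrix.smul_single, smul_eq_mul, mul_one]
  rw [h2, _root_.map_smul, Matrix.smul_apply, smul_eq_mul]

lemma sum4_comm {α β γ δ : Type*} [Fintype α] [Fintype β] [Fintype γ] [Fintype δ]
    (f : α → β → γ → δ → ℂ) :
    ∑ a, ∑ b, ∑ c, ∑ d, f a b c d = ∑ c, ∑ d, ∑ a, ∑ b, f a b c d := by
  have h1 : ∀ a : α, ∑ b : β, ∑ c : γ, ∑ d : δ, f a b c d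
      = ∑ c : γ, ∑ b : β, ∑ d : δ, f a b c d := fun a => Finset.sum_comm
  simp only [h1]
  rw [Finset.sum_comm]
  refine Finset.sum_congr rfl fun c _ => ?_
  have h2 : ∀ a : α, ∑ b : β, ∑ d : δ, f a b c d
      = ∑ d : δ, ∑ b : β, f a b c d := fun a => Finset.sum_comm
  simp only [h2]
  exact Finset.sum_comm

open scoped MatrixOrder in
lemma posSemidef_exists_conjTranspose_mul {n : Type} [Fintype n] {A : Matrix n n ℂ}
    (hA : A.PosSemidef) : ∃ B : Matrix n n ℂ, A = Bᴴ * B := by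
  classical
  have h0 : 0 ≤ A := nonneg_iff_posSemidef.mpr hA
  refine ⟨CFC.sqrt A, ?_⟩
  have hs : IsSelfAdjoint (CFC.sqrt A) := (CFC.sqrt_nonneg A).isSelfAdjoint
  rw [← Matrix.star_eq_conjTranspose, hs.star_eq, CFC.sqrt_mul_sqrt_self A h0]

lemma isChannel_comp {ι κ μ : Type} [Fintype ι] [DecidableEq ι] [Fintype κ] [DecidableEq κ]
    [Fintype μ]
    {M : Matrix ι ι ℂ →ₗ[ℂ] Matrix κ κ ℂ} {N : Matrix κ κ ℂ →ₗ[ℂ] Matrix μ μ ℂ}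
    (hM : IsChannel M) (hN : IsChannel N) : IsChannel (N ∘ₗ M) := by
  constructor
  · obtain ⟨B, hB⟩ := posSemidef_exists_conjTranspose_mul hM.1
    obtain ⟨C, hC⟩ := posSemidef_exists_conjTranspose_mul hN.1
    set D : Matrix ((ι × κ) × (κ × μ)) (ι × μ) ℂ :=
      Matrix.of fun st im => ∑ a : κ, B st.1 (im.1, a) * C st.2 (a, im.2) with hD
    have key : choi (N ∘ₗ M) = Dᴴ * D := by
      ext p q
      rw [choi_comp, Matrix.mul_apply]
      have hBapp : ∀ (x y : ι × κ), choi M x y = ∑ s, star (B s x) * B s y := by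
        intro x y
        rw [hB, Matrix.mul_apply]
        simp [Matrix.conjTranspose_apply]
      have hCapp : ∀ (x y : κ × μ), choi N x y = ∑ s, star (C s x) * C s y := by
        intro x y
        rw [hC, Matrix.mul_apply]
        simp [Matrix.conjTranspose_apply]
      rw [Fintype.sum_prod_type]
      simp only [hBapp, hCapp, Matrix.conjTranspose_apply, hD, Matrix.of_apply,
        Finset.sum_mul, Finset.mul_sum, star_sum, star_mul']
      rw [sum4_comm]
      rw [Finset.sum_comm]
      refine Finset.sum_congr rfl fun u _ => Finset.sum_congr rfl fun v _ => ?_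
      rw [Finset.sum_comm]
      refine Finset.sum_congr rfl fun b _ => Finset.sum_congr rfl fun a _ => ?_
      ring
    rw [key]
    exact Matrix.posSemidef_conjTranspose_mul_self D
  · intro ρ
    simp [LinearMap.comp_apply, hN.2, hM.2]

lemma isChannel_id (d : ℕ) :
    IsChannel (LinearMap.id : Matrix (Fin d) (Fin d) ℂ →ₗ[ℂ] Matrix (Fin d) (Fin d) ℂ) := by
  constructor
  · set B : Matrix Unit (Fin d × Fin d) ℂ :=
      Matrix.of fun _ p => if p.1 = p.2 then 1 else 0 with hB
    have : choi (LinearMap.id : Matrix (Fin d) (Fin d) ℂ →ₗ[ℂ] Matrix (Fin d) (Fin d) ℂ)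
        = Bᴴ * B := by
      ext p q
      simp only [choi, Matrix.of_apply, LinearMap.id_apply, Matrix.mul_apply,
        Matrix.conjTranspose_apply, hB, Finset.univ_unique, Finset.sum_singleton]
      rw [Matrix.single]
      by_cases h1 : p.1 = p.2 <;> by_cases h2 : q.1 = q.2 <;>
        simp [Matrix.of_apply, h1, h2]
    rw [this]
    exact Matrix.posSemidef_conjTranspose_mul_self B
  · intro ρ; rfl

lemma isChannel_deph (d : ℕ) : IsChannel (deph d) := by
  constructor
  · have : choi (deph d) = Matrix.diagonal (fun p : Fin d × Fin d =>
        if p.1 = p.2 then (1 : ℂ) else 0) := by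
      ext p q
      simp only [choi, Matrix.of_apply, deph_apply, Matrix.diagonal_apply,
        Matrix.single]
      rcases p with ⟨p1, p2⟩
      rcases q with ⟨q1, q2⟩
      by_cases h : (p1, p2) = (q1, q2)
      · rw [if_pos h]
        rcases Prod.mk.injEq .. ▸ h with ⟨h1, h2⟩
        subst h1; subst h2
        by_cases h3 : p1 = p2 <;> simp [h3]
      · rw [if_neg h]
        simp only [Matrix.of_apply]
        aesop
    rw [this]
    refine Matrix.posSemidef_diagonal_iff.mpr fun p => ?_
    by_cases h : p.1 = p.2 <;> simp [h]
  · intro ρ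
    simp [Matrix.trace, Matrix.diag, deph_apply]

variable (f : ∀ (m k : ℕ),
  (Matrix (Fin m) (Fin m) ℂ →ₗ[ℂ] Matrix (Fin k) (Fin k) ℂ) →
  (Matrix (Fin m) (Fin m) ℂ →ₗ[ℂ] Matrix (Fin k) (Fin k) ℂ) → ℝ)

/-- The DI coherence measure: infimum distance (after dephasing) to DI channels. -/
def CDI (m k : ℕ) (N : Matrix (Fin m) (Fin m) ℂ →ₗ[ℂ] Matrix (Fin k) (Fin k) ℂ) : ℝ :=
  sInf {x : ℝ | ∃ K, IsChannel K ∧ (deph k ∘ₗ K = deph k ∘ₗ K ∘ₗ deph m) ∧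
    x = f m k (deph k ∘ₗ N) (deph k ∘ₗ K)}

/-- The CI coherence measure: infimum distance (with pre-dephasing) to CI channels. -/
def CCI (m k : ℕ) (N : Matrix (Fin m) (Fin m) ℂ →ₗ[ℂ] Matrix (Fin k) (Fin k) ℂ) : ℝ :=
  sInf {x : ℝ | ∃ K, IsChannel K ∧ (K ∘ₗ deph m = deph k ∘ₗ K ∘ₗ deph m) ∧
    x = f m k (N ∘ₗ deph m) (K ∘ₗ deph m)}

/-- The DCI coherence measure: infimum distance to DCI channels. -/
def CDCI (m k : ℕ) (N : Matrix (Fin m) (Fin m) ℂ →ₗ[ℂ] Matrix (Fin k) (Fin k) ℂ) : ℝ :=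
  sInf {x : ℝ | ∃ K, IsChannel K ∧ (deph k ∘ₗ K = K ∘ₗ deph m) ∧
    x = f m k N K}

/-- Monotonicity of the CI coherence measure under left composition with a CI channel. -/
theorem CCI_mono_left (a b c : ℕ)
    (hf_nonneg : ∀ (m k : ℕ) X Y, 0 ≤ f m k X Y)
    -- weak monotonicity of `f` under pre- and post-composition with channels
    (hf_mono : ∀ (m k m' k' : ℕ)
      (U : Matrix (Fin m') (Fin m') ℂ →ₗ[ℂ] Matrix (Fin m) (Fin m) ℂ)
      (V : Matrix (Fin k) (Fin k) ℂ →ₗ[ℂ] Matrix (Fin k') (Fin k') ℂ)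
      (N M : Matrix (Fin m) (Fin m) ℂ →ₗ[ℂ] Matrix (Fin k) (Fin k) ℂ),
      IsChannel U → IsChannel V → IsChannel N → IsChannel M →
      f m' k' (V ∘ₗ N ∘ₗ U) (V ∘ₗ M ∘ₗ U) ≤ f m k N M)
    (N : Matrix (Fin a) (Fin a) ℂ →ₗ[ℂ] Matrix (Fin b) (Fin b) ℂ)
    (hN : IsChannel N)
    (Φ : Matrix (Fin b) (Fin b) ℂ →ₗ[ℂ] Matrix (Fin c) (Fin c) ℂ)
    (hΦ : IsChannel Φ)
    (hΦCI : Φ ∘ₗ deph b = deph c ∘ₗ Φ ∘ₗ deph b) :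
    CCI f a c (Φ ∘ₗ N) ≤ CCI f a b N := by
  have hbddA : BddBelow {x : ℝ | ∃ K, IsChannel K ∧ (K ∘ₗ deph a = deph c ∘ₗ K ∘ₗ deph a) ∧
      x = f a c ((Φ ∘ₗ N) ∘ₗ deph a) (K ∘ₗ deph a)} := by
    refine ⟨0, fun x hx => ?_⟩
    obtain ⟨K, _, _, rfl⟩ := hx
    exact hf_nonneg _ _ _ _
  have hne : {x : ℝ | ∃ K, IsChannel K ∧ (K ∘ₗ deph a = deph b ∘ₗ K ∘ₗ deph a) ∧
      x = f a b (N ∘ₗ deph a) (K ∘ₗ deph a)}.Nonempty := by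
    refine ⟨f a b (N ∘ₗ deph a) ((deph b ∘ₗ N) ∘ₗ deph a), deph b ∘ₗ N,
      isChannel_comp hN (isChannel_deph b), ?_, rfl⟩
    exact congrArg (fun L => L ∘ₗ (N ∘ₗ deph a)) (deph_idem b).symm
  refine le_csInf hne ?_
  rintro x ⟨K, hK, hKCI, rfl⟩
  have hCI : (Φ ∘ₗ K) ∘ₗ deph a = deph c ∘ₗ (Φ ∘ₗ K) ∘ₗ deph a :=
    calc (Φ ∘ₗ K) ∘ₗ deph a
        = Φ ∘ₗ (deph b ∘ₗ (K ∘ₗ deph a)) := congrArg (fun L => Φ ∘ₗ L) hKCI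
      _ = (deph c ∘ₗ Φ ∘ₗ deph b) ∘ₗ (K ∘ₗ deph a) :=
          congrArg (fun L => L ∘ₗ (K ∘ₗ deph a)) hΦCI
      _ = deph c ∘ₗ Φ ∘ₗ (deph b ∘ₗ (K ∘ₗ deph a)) := rfl
      _ = deph c ∘ₗ (Φ ∘ₗ K) ∘ₗ deph a := congrArg (fun L => deph c ∘ₗ Φ ∘ₗ L) hKCI.symm
  have hmem : f a c ((Φ ∘ₗ N) ∘ₗ deph a) ((Φ ∘ₗ K) ∘ₗ deph a) ∈
      {x : ℝ | ∃ K, IsChannel K ∧ (K ∘ₗ deph a = deph c ∘ₗ K ∘ₗ deph a) ∧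
      x = f a c ((Φ ∘ₗ N) ∘ₗ deph a) (K ∘ₗ deph a)} :=
    ⟨Φ ∘ₗ K, isChannel_comp hK hΦ, hCI, rfl⟩
  refine le_trans (csInf_le hbddA hmem) ?_
  have h := hf_mono a b a c LinearMap.id Φ (N ∘ₗ deph a) (K ∘ₗ deph a)
    (isChannel_id a) hΦ (isChannel_comp (isChannel_deph a) hN)
    (isChannel_comp (isChannel_deph a) hK)
  simpa [LinearMap.comp_assoc, LinearMap.comp_id] using h


end
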